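/- Consider the signed network coordination game on a network (V, W) with external field h and a partition V = R ∪ S (R, S disjoint) with W_ij ≥ 0 for all i, j ∈ R. Let h^+, h^− ∈ ℝ^R be defined by h^+_i = h_i + w_i^S and h^−_i = h_i − w_i^S for i ∈ R. Assume the subnetwork (R, W_{RR}) is (h^−, h^+)-indecomposable and w_i^R − |h_i| > w_i^S for every i ∈ R. If for each a ∈ {−1, +1} the set N_S^(a𝟏) of Nash equilibria of the S-restricted game with the strategy profile of players in R frozen to the constant profile a𝟏 is globally BR-reachable for that restricted game, then the set Ñ = { x* ∈ N : x*_R is a constant profile (all +1 or all −1) } of Nash equilibria of the SNC game is nonempty and globally BR-reachable. -/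

import Mathlib

open Finset Function

noncomputable section

/-- The binary action set `A = {−1, +1}`, as a subtype of `ℝ`. -/
abbrev Act : Type := {r : ℝ // r = 1 ∨ r = -1}

def onePt : Act := ⟨1, Or.inl rfl⟩

def negOnePt : Act := ⟨-1, Or.inr rfl⟩

def actMul (a b : Act) : Act :=
  ⟨(a : ℝ) * (b : ℝ), by rcases a.2 with h1 | h1 <;> rcases b.2 with h2 | h2 <;> norm_num [h1, h2]⟩

def actNeg (a : Act) : Act :=
  ⟨-(a : ℝ), by rcases a.2 with h1 | h1 <;> norm_num [h1]⟩

/-- Utility of player `i` in the SNC game on the network `(V, W)` with external field `h`. -/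
def utility {V : Type*} [Fintype V] (W : V → V → ℝ) (h : V → ℝ) (i : V) (x : V → Act) : ℝ :=
  h i * (x i : ℝ) + (x i : ℝ) * ∑ j, W i j * (x j : ℝ)

/-- Best response set of player `i` (depends only on `x_{−i}`). -/
def bestResponse {V : Type*} [Fintype V] [DecidableEq V] (W : V → V → ℝ) (h : V → ℝ)
    (i : V) (x : V → Act) : Set Act :=
  {a | ∀ b : Act, utility W h i (Function.update x i b) ≤ utility W h i (Function.update x i a)}

/-- Nash equilibrium of the SNC game. -/
def IsNash {V : Type*} [Fintype V] [DecidableEq V] (W : V → V → ℝ) (h : V → ℝ)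
    (x : V → Act) : Prop :=
  ∀ i, x i ∈ bestResponse W h i x

/-- One step of a best-response path. -/
def BRStep {V : Type*} [Fintype V] [DecidableEq V] (W : V → V → ℝ) (h : V → ℝ)
    (x y : V → Act) : Prop :=
  ∃ i, (∀ j, j ≠ i → y j = x j) ∧ y i ≠ x i ∧ y i ∈ bestResponse W h i x

def GloballyBRReachable {V : Type*} [Fintype V] [DecidableEq V] (W : V → V → ℝ) (h : V → ℝ)
    (X : Set (V → Act)) : Prop :=
  ∀ x : V → Act, ∃ y ∈ X, Relation.ReflTransGen (BRStep W h) x y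

def BRInvariant {V : Type*} [Fintype V] [DecidableEq V] (W : V → V → ℝ) (h : V → ℝ)
    (X : Set (V → Act)) : Prop :=
  ∀ x ∈ X, ∀ y, Relation.ReflTransGen (BRStep W h) x y → y ∈ X

def GloballyBRStable {V : Type*} [Fintype V] [DecidableEq V] (W : V → V → ℝ) (h : V → ℝ)
    (X : Set (V → Act)) : Prop :=
  GloballyBRReachable W h X ∧ BRInvariant W h X

/-- Structural balance of a signed weight matrix. -/
def StructurallyBalanced {V : Type*} (W : V → V → ℝ) : Prop :=
  ∃ P : Set V, (∀ i j, (i ∈ P ↔ j ∈ P) → 0 ≤ W i j) ∧ (∀ i j, ¬(i ∈ P ↔ j ∈ P) → W i j ≤ 0)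

/-- `(h^−, h^+)`-indecomposability of a network. -/
def Indecomposable {V : Type*} [Fintype V] [DecidableEq V] (W : V → V → ℝ)
    (hm hp : V → ℝ) : Prop :=
  ∀ P M : Finset V, P ∪ M = Finset.univ → Disjoint P M → P.Nonempty → M.Nonempty →
    (∃ i ∈ P, ∑ j ∈ P, |W i j| + hp i < ∑ j ∈ M, |W i j|) ∨
    (∃ i ∈ M, (∑ j ∈ M, |W i j|) - hm i < ∑ j ∈ P, |W i j|)

/-!
Starting from any profile, first let the `+1` players of `R` with negative local field switch
to `-1`, then let the `-1` players of `R` with nonnegative local field switch to `+1`; because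
`W ≥ 0` on `R`, the second phase never makes a `+1` player of `R` unhappy. At the end every
player of `R` plays the sign of its local field, and indecomposability, with the influence of
`S` absorbed into the bounds `h ± w^S`, forces `R` to a consensus `a`. Freezing `R` at `a`, a
best-response path of the restricted game on `S` lifts to the whole game and ends in a Nash
equilibrium of the restricted game; the players of `R` are still content there since
`w_i^R - |h_i| > w_i^S`.
-/

theorem exists_reflTransGen_of_measure_lt {α : Type*} {r : α → α → Prop} (μ : α → ℕ)
    {I P : α → Prop} (hstep : ∀ x, I x → ¬ P x → ∃ y, r x y ∧ I y ∧ μ y < μ x)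
    (x : α) (hx : I x) : ∃ y, Relation.ReflTransGen r x y ∧ I y ∧ P y := by
  induction x using (measure μ).wf.induction with
  | _ x ih =>
    by_cases hP : P x
    · exact ⟨x, .refl, hx, hP⟩
    obtain ⟨y, hxy, hy, hlt⟩ := hstep x hx hP
    obtain ⟨z, hyz, hz⟩ := ih y hlt hy
    exact ⟨z, .head hxy hyz, hz⟩

theorem card_filter_update_lt {V β : Type*} [DecidableEq V] [DecidableEq β] {R : Finset V}
    {x : V → β} {i : V} {a b : β} (hi : i ∈ R) (hxi : x i = b) (hab : a ≠ b) :
    #{j ∈ R | update x i a j = b} < #{j ∈ R | x j = b} := by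
  refine card_lt_card ((ssubset_iff_of_subset fun j => ?_).2 ⟨i, ?_, ?_⟩)
  · rcases eq_or_ne j i with rfl | hj
    · simp [hab]
    · simp [update_of_ne hj]
  · simp [hi, hxi]
  · simp [hab]

namespace Act

theorem eq_onePt_or_eq_negOnePt (a : Act) : a = onePt ∨ a = negOnePt := by
  rcases a.2 with h | h
  exacts [Or.inl (Subtype.ext h), Or.inr (Subtype.ext h)]

@[simp] theorem coe_onePt : ((onePt : Act) : ℝ) = 1 := rfl

@[simp] theorem coe_negOnePt : ((negOnePt : Act) : ℝ) = -1 := rfl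

@[simp] theorem negOnePt_ne_onePt : negOnePt ≠ onePt := fun h => by
  norm_num [Subtype.ext_iff] at h

@[simp] theorem onePt_ne_negOnePt : onePt ≠ negOnePt := negOnePt_ne_onePt.symm

theorem abs_coe (a : Act) : |(a : ℝ)| = 1 := by
  rcases a.2 with h | h <;> simp [h]

theorem coe_mul_self (a : Act) : (a : ℝ) * a = 1 := by
  rcases a.2 with h | h <;> simp [h]

theorem abs_sum_mul_le {V : Type*} (T : Finset V) (w : V → ℝ) (x : V → Act) :
    |∑ j ∈ T, w j * x j| ≤ ∑ j ∈ T, |w j| :=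
  (abs_sum_le_sum_abs _ _).trans_eq (sum_congr rfl fun j _ => by rw [abs_mul, abs_coe, mul_one])

theorem sum_mul_eq_sub {ι : Type*} [Fintype ι] (w : ι → ℝ) (x : ι → Act) :
    ∑ j, w j * x j = ∑ j with x j = onePt, w j - ∑ j with x j = negOnePt, w j := by
  rw [← sum_filter_add_sum_filter_not univ (fun j => x j = onePt), sub_eq_add_neg,
    ← sum_neg_distrib]
  congr 1
  · exact sum_congr rfl fun j hj => by simp [(mem_filter.1 hj).2]
  · rw [filter_congr fun j _ => show x j ≠ onePt ↔ x j = negOnePt by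
      rcases eq_onePt_or_eq_negOnePt (x j) with h | h <;> simp [h]]
    exact sum_congr rfl fun j hj => by simp [(mem_filter.1 hj).2]

end Act

def extendProfile {V : Type*} [DecidableEq V] (S : Finset V) (x : V → Act) (z : S → Act) :
    V → Act :=
  fun j => if hj : j ∈ S then z ⟨j, hj⟩ else x j

@[simp] theorem extendProfile_coe {V : Type*} [DecidableEq V] (S : Finset V) (x : V → Act)
    (z : S → Act) (j : S) : extendProfile S x z j = z j :=
  dif_pos j.2

theorem extendProfile_of_notMem {V : Type*} [DecidableEq V] {S : Finset V} (x : V → Act)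
    (z : S → Act) {j : V} (hj : j ∉ S) : extendProfile S x z j = x j :=
  dif_neg hj

theorem extendProfile_of_mem {V : Type*} [DecidableEq V] {R S : Finset V} (hRS : Disjoint R S)
    (x : V → Act) (z : S → Act) {j : V} (hj : j ∈ R) : extendProfile S x z j = x j :=
  extendProfile_of_notMem x z (disjoint_left.1 hRS hj)

theorem extendProfile_restrict {V : Type*} [DecidableEq V] (S : Finset V) (x : V → Act) :
    extendProfile S x (fun j => x j) = x :=
  funext fun j => by unfold extendProfile; split_ifs <;> rfl

section Game

variable {V : Type*} [Fintype V] {W : V → V → ℝ} {h : V → ℝ}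

def localField (W : V → V → ℝ) (h : V → ℝ) (i : V) (x : V → Act) : ℝ :=
  h i + ∑ j, W i j * (x j : ℝ)

theorem utility_eq_mul_localField (i : V) (x : V → Act) :
    utility W h i x = x i * localField W h i x := by
  unfold utility localField
  ring

variable [DecidableEq V]

theorem localField_update (j i : V) (x : V → Act) (a : Act) :
    localField W h j (update x i a) = localField W h j x + W j i * (a - x i) := by
  have hterm : ∀ k, W j k * (update x i a k : ℝ)
      = W j k * x k + if k = i then W j i * (a - x i) else 0 := by
    intro k
    rcases eq_or_ne k i with rfl | hk
    · simp only [update_self, if_true]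
      ring
    · simp [hk]
  simp only [localField, hterm, sum_add_distrib, sum_ite_eq', mem_univ, if_true]
  ring

theorem localField_update_self (hdiag : ∀ i, W i i = 0) (i : V) (x : V → Act) (a : Act) :
    localField W h i (update x i a) = localField W h i x := by
  rw [localField_update, hdiag, zero_mul, add_zero]

theorem mem_bestResponse_iff (hdiag : ∀ i, W i i = 0) {i : V} {x : V → Act} {a : Act} :
    a ∈ bestResponse W h i x ↔ 0 ≤ (a : ℝ) * localField W h i x := by
  simp only [bestResponse, Set.mem_ofPred_eq, utility_eq_mul_localField, update_self,
    localField_update_self hdiag]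
  constructor
  · intro H
    have := H (actNeg a)
    simp only [actNeg] at this
    linarith
  · intro H b
    calc (b : ℝ) * localField W h i x ≤ |(b : ℝ) * localField W h i x| := le_abs_self _
      _ = |(a : ℝ) * localField W h i x| := by rw [abs_mul, abs_mul, Act.abs_coe, Act.abs_coe]
      _ = (a : ℝ) * localField W h i x := abs_of_nonneg H

theorem brStep_update {i : V} {x : V → Act} {a : Act} (hne : a ≠ x i)
    (hbr : a ∈ bestResponse W h i x) : BRStep W h x (update x i a) :=
  ⟨i, fun _ hj => update_of_ne hj _ _, by simpa using hne, by simpa using hbr⟩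

theorem exists_reflTransGen_onePt_localField_nonneg (hdiag : ∀ i, W i i = 0) (R : Finset V)
    (x : V → Act) : ∃ y, Relation.ReflTransGen (BRStep W h) x y ∧
      ∀ i ∈ R, y i = onePt → 0 ≤ localField W h i y := by
  refine (exists_reflTransGen_of_measure_lt (I := fun _ => True)
    (fun y => #{i ∈ R | y i = onePt}) (fun y _ hy => ?_) x trivial).imp
    fun y ⟨hxy, _, hy⟩ => ⟨hxy, hy⟩
  push Not at hy
  obtain ⟨i, hiR, hyi, hK⟩ := hy
  refine ⟨update y i negOnePt, brStep_update ?_ ?_, trivial,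
    card_filter_update_lt hiR hyi Act.negOnePt_ne_onePt⟩
  · simp [hyi]
  · rw [mem_bestResponse_iff hdiag, Act.coe_negOnePt]
    linarith

theorem exists_reflTransGen_localField_sign_agrees (hdiag : ∀ i, W i i = 0) {R : Finset V}
    (hRpos : ∀ i ∈ R, ∀ j ∈ R, 0 ≤ W i j) (x : V → Act)
    (hx : ∀ i ∈ R, x i = onePt → 0 ≤ localField W h i x) :
    ∃ y, Relation.ReflTransGen (BRStep W h) x y ∧
      (∀ i ∈ R, y i = onePt → 0 ≤ localField W h i y) ∧
      (∀ i ∈ R, y i = negOnePt → localField W h i y < 0) := by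
  refine exists_reflTransGen_of_measure_lt (fun y => #{i ∈ R | y i = negOnePt})
    (fun y hy hneg => ?_) x hx
  push Not at hneg
  obtain ⟨i, hiR, hyi, hK⟩ := hneg
  refine ⟨update y i onePt, brStep_update ?_ ?_, fun j hjR hj => ?_,
    card_filter_update_lt hiR hyi Act.onePt_ne_negOnePt⟩
  · simp [hyi]
  · rw [mem_bestResponse_iff hdiag, Act.coe_onePt]
    linarith
  · rw [localField_update]
    rcases eq_or_ne j i with rfl | hji
    · rw [hdiag, zero_mul, add_zero]
      exact hK
    · rw [update_of_ne hji] at hj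
      have hWji := hRpos j hjR i hiR
      rw [hyi, Act.coe_onePt, Act.coe_negOnePt]
      linarith [hy j hjR hj]

theorem localField_eq_add_sum {R S : Finset V} (hRS : IsCompl R S) (i : V) (x : V → Act) :
    localField W h i x = h i + ∑ j ∈ R, W i j * x j + ∑ j ∈ S, W i j * x j := by
  rw [localField, ← hRS.compl_eq, add_assoc, sum_add_sum_compl]

theorem exists_forall_eq_of_indecomposable {R S : Finset V} (hRS : IsCompl R S)
    (hRpos : ∀ i ∈ R, ∀ j ∈ R, 0 ≤ W i j)
    (hind : Indecomposable (fun i j : R => W i j) (fun i : R => h i - ∑ j ∈ S, |W i j|)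
      (fun i : R => h i + ∑ j ∈ S, |W i j|))
    {x : V → Act} (hplus : ∀ i ∈ R, x i = onePt → 0 ≤ localField W h i x)
    (hminus : ∀ i ∈ R, x i = negOnePt → localField W h i x < 0) :
    ∃ a, ∀ i ∈ R, x i = a := by
  by_contra! hmix
  obtain ⟨i₁, hi₁R, hi₁⟩ := hmix negOnePt
  obtain ⟨i₂, hi₂R, hi₂⟩ := hmix onePt
  set P : Finset R := {j | x j = onePt}
  set M : Finset R := {j | x j = negOnePt}
  have hK : ∀ i : R, localField W h i x
      = h i + (∑ j ∈ P, |W i j| - ∑ j ∈ M, |W i j|) + ∑ j ∈ S, W i j * x j := by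
    intro i
    rw [localField_eq_add_sum hRS, ← sum_coe_sort R]
    rw [Act.sum_mul_eq_sub (fun j : R => W i j) (fun j : R => x j)]
    have habs : ∀ j : R, |W i j| = W i j := fun j => abs_of_nonneg (hRpos _ i.2 _ j.2)
    simp only [habs]
    ring
  have hS := fun i : R => abs_le.1 (Act.abs_sum_mul_le S (W i) x)
  have hPM : P ∪ M = univ := eq_univ_of_forall fun j => by
    rcases Act.eq_onePt_or_eq_negOnePt (x j) with hj | hj <;> simp [P, M, hj]
  have hdisj : Disjoint P M := disjoint_filter.2 fun j _ hj => by simp [hj]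
  have hPne : P.Nonempty :=
    ⟨⟨i₁, hi₁R⟩, by simpa [P] using (Act.eq_onePt_or_eq_negOnePt _).resolve_right hi₁⟩
  have hMne : M.Nonempty :=
    ⟨⟨i₂, hi₂R⟩, by simpa [M] using (Act.eq_onePt_or_eq_negOnePt _).resolve_left hi₂⟩
  rcases hind P M hPM hdisj hPne hMne with ⟨i, hiP, hlt⟩ | ⟨i, hiM, hlt⟩
  · have := hplus i i.2 (mem_filter.1 hiP).2
    beta_reduce at hlt
    linarith [hK i, (hS i).2]
  · have := hminus i i.2 (mem_filter.1 hiM).2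
    beta_reduce at hlt
    linarith [hK i, (hS i).1]

theorem exists_reflTransGen_forall_eq (hdiag : ∀ i, W i i = 0) {R S : Finset V}
    (hRS : IsCompl R S) (hRpos : ∀ i ∈ R, ∀ j ∈ R, 0 ≤ W i j)
    (hind : Indecomposable (fun i j : R => W i j) (fun i : R => h i - ∑ j ∈ S, |W i j|)
      (fun i : R => h i + ∑ j ∈ S, |W i j|))
    (x : V → Act) :
    ∃ y, Relation.ReflTransGen (BRStep W h) x y ∧ ∃ a, ∀ i ∈ R, y i = a := by
  obtain ⟨y, hxy, hy⟩ := exists_reflTransGen_onePt_localField_nonneg hdiag R x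
  obtain ⟨z, hyz, hplus, hminus⟩ := exists_reflTransGen_localField_sign_agrees hdiag hRpos y hy
  exact ⟨z, hxy.trans hyz, exists_forall_eq_of_indecomposable hRS hRpos hind hplus hminus⟩

theorem mem_bestResponse_of_forall_eq (hdiag : ∀ i, W i i = 0) {R S : Finset V}
    (hRS : IsCompl R S) (hRpos : ∀ i ∈ R, ∀ j ∈ R, 0 ≤ W i j) {i : V} (hi : i ∈ R)
    (hdeg : ∑ j ∈ S, |W i j| < ∑ j ∈ R, |W i j| - |h i|) {x : V → Act} {a : Act}
    (hx : ∀ j ∈ R, x j = a) : a ∈ bestResponse W h i x := by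
  have hR : (a : ℝ) * ∑ j ∈ R, W i j * x j = ∑ j ∈ R, |W i j| := by
    rw [mul_sum]
    refine sum_congr rfl fun j hj => ?_
    rw [hx j hj, abs_of_nonneg (hRpos i hi j hj), mul_comm, mul_assoc, Act.coe_mul_self,
      mul_one]
  have hh : -|h i| ≤ (a : ℝ) * h i := by
    simpa [abs_mul, Act.abs_coe] using neg_abs_le ((a : ℝ) * h i)
  have hS : -∑ j ∈ S, |W i j| ≤ (a : ℝ) * ∑ j ∈ S, W i j * x j := by
    have := Act.abs_sum_mul_le S (W i) x
    have := neg_abs_le ((a : ℝ) * ∑ j ∈ S, W i j * x j)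
    rw [abs_mul, Act.abs_coe, one_mul] at this
    linarith
  rw [mem_bestResponse_iff hdiag, localField_eq_add_sum hRS, mul_add, mul_add, hR]
  linarith

section Frozen

variable {R S : Finset V} {x : V → Act} {hS : S → ℝ}

theorem localField_extendProfile (hRS : IsCompl R S)
    (hS_eq : ∀ i : S, hS i = h i + ∑ j ∈ R, W i j * x j) (z : S → Act) (i : S) :
    localField W h i (extendProfile S x z) = localField (fun i j : S => W i j) hS i z := by
  rw [localField_eq_add_sum hRS, localField, hS_eq,
    sum_congr rfl fun j hj => by rw [extendProfile_of_mem hRS.disjoint x z hj], ← sum_coe_sort S]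
  simp only [extendProfile_coe, add_assoc]

theorem bestResponse_extendProfile (hdiag : ∀ i, W i i = 0) (hRS : IsCompl R S)
    (hS_eq : ∀ i : S, hS i = h i + ∑ j ∈ R, W i j * x j) (z : S → Act) (i : S) :
    bestResponse W h i (extendProfile S x z) = bestResponse (fun i j : S => W i j) hS i z :=
  Set.ext fun _ => by
    rw [mem_bestResponse_iff hdiag, mem_bestResponse_iff (W := fun i j : S => W i j) (hdiag ·),
      localField_extendProfile hRS hS_eq]

theorem brStep_extendProfile (hdiag : ∀ i, W i i = 0) (hRS : IsCompl R S)
    (hS_eq : ∀ i : S, hS i = h i + ∑ j ∈ R, W i j * x j) {z z' : S → Act}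
    (hzz' : BRStep (fun i j : S => W i j) hS z z') :
    BRStep W h (extendProfile S x z) (extendProfile S x z') := by
  obtain ⟨i, hoff, hne, hbr⟩ := hzz'
  refine ⟨i, fun j hji => ?_, by simpa using hne, ?_⟩
  · by_cases hj : j ∈ S
    · lift j to S using hj
      simpa using hoff j fun h => hji (congrArg Subtype.val h)
    · simp only [extendProfile_of_notMem x _ hj]
  · rwa [extendProfile_coe, bestResponse_extendProfile hdiag hRS hS_eq]

theorem exists_reflTransGen_extendProfile (hdiag : ∀ i, W i i = 0) (hRS : IsCompl R S)
    (hS_eq : ∀ i : S, hS i = h i + ∑ j ∈ R, W i j * x j) {X : Set (S → Act)}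
    (hreach : GloballyBRReachable (fun i j : S => W i j) hS X) :
    ∃ z ∈ X, Relation.ReflTransGen (BRStep W h) x (extendProfile S x z) := by
  obtain ⟨z, hz, hpath⟩ := hreach fun j => x j
  have hlift : Relation.ReflTransGen (BRStep W h) (extendProfile S x fun j => x j)
      (extendProfile S x z) :=
    Relation.ReflTransGen.lift (extendProfile S x)
      (fun _ _ => brStep_extendProfile hdiag hRS hS_eq) _ _ hpath
  exact ⟨z, hz, by rwa [extendProfile_restrict] at hlift⟩

theorem isNash_extendProfile (hdiag : ∀ i, W i i = 0) (hRS : IsCompl R S)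
    (hRpos : ∀ i ∈ R, ∀ j ∈ R, 0 ≤ W i j)
    (hdeg : ∀ i ∈ R, ∑ j ∈ S, |W i j| < ∑ j ∈ R, |W i j| - |h i|) {a : Act}
    (hx : ∀ j ∈ R, x j = a) (hS_eq : ∀ i : S, hS i = h i + ∑ j ∈ R, W i j * x j)
    {z : S → Act} (hz : IsNash (fun i j : S => W i j) hS z) :
    IsNash W h (extendProfile S x z) := by
  have hR : ∀ j ∈ R, extendProfile S x z j = a := fun j hj => by
    rw [extendProfile_of_mem hRS.disjoint x z hj, hx j hj]
  intro i
  by_cases hi : i ∈ S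
  · lift i to S using hi
    rw [extendProfile_coe, bestResponse_extendProfile hdiag hRS hS_eq]
    exact hz i
  · have hiR : i ∈ R := by simpa [← hRS.compl_eq] using hi
    rw [hR i hiR]
    exact mem_bestResponse_of_forall_eq hdiag hRS hRpos hiR (hdeg i hiR) hR

end Frozen

end Game

theorem stmt13_general {V : Type*} [Fintype V] [DecidableEq V]
    (W : V → V → ℝ) (h : V → ℝ) (hdiag : ∀ i, W i i = 0)
    (R S : Finset V) (hUnion : R ∪ S = Finset.univ) (hDisj : Disjoint R S)
    (hRpos : ∀ i ∈ R, ∀ j ∈ R, 0 ≤ W i j)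
    (hind : Indecomposable (fun i j : {i // i ∈ R} => W i.1 j.1)
      (fun i : {i // i ∈ R} => h i.1 - ∑ j ∈ S, |W i.1 j|)
      (fun i : {i // i ∈ R} => h i.1 + ∑ j ∈ S, |W i.1 j|))
    (hdeg : ∀ i ∈ R, ∑ j ∈ S, |W i j| < (∑ j ∈ R, |W i j|) - |h i|)
    (hreach : ∀ a : Act, GloballyBRReachable (fun i j : {i // i ∈ S} => W i.1 j.1)
      (fun i : {i // i ∈ S} => h i.1 + ∑ j ∈ R, W i.1 j * (a : ℝ))
      {z : {i // i ∈ S} → Act | IsNash (fun i j : {i // i ∈ S} => W i.1 j.1)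
        (fun i : {i // i ∈ S} => h i.1 + ∑ j ∈ R, W i.1 j * (a : ℝ)) z}) :
    ({x : V → Act | IsNash W h x ∧
        ((∀ i ∈ R, x i = onePt) ∨ (∀ i ∈ R, x i = negOnePt))}).Nonempty ∧
    GloballyBRReachable W h
      {x : V → Act | IsNash W h x ∧
        ((∀ i ∈ R, x i = onePt) ∨ (∀ i ∈ R, x i = negOnePt))} := by
  have hRS : IsCompl R S := ⟨hDisj, codisjoint_iff.2 hUnion⟩
  have hreachable : GloballyBRReachable W h
      {x : V → Act | IsNash W h x ∧
        ((∀ i ∈ R, x i = onePt) ∨ (∀ i ∈ R, x i = negOnePt))} := by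
    intro x
    obtain ⟨y, hxy, a, hya⟩ := exists_reflTransGen_forall_eq hdiag hRS hRpos hind x
    have hS_eq (i : S) : h i + ∑ j ∈ R, W i j * (a : ℝ) = h i + ∑ j ∈ R, W i j * y j := by
      congr 1
      exact sum_congr rfl fun j hj => by rw [hya j hj]
    obtain ⟨z, hz, hyz⟩ := exists_reflTransGen_extendProfile hdiag hRS hS_eq (hreach a)
    have hR (i) (hi : i ∈ R) : extendProfile S y z i = a := by
      rw [extendProfile_of_mem hDisj y z hi, hya i hi]
    refine ⟨_, ⟨isNash_extendProfile hdiag hRS hRpos hdeg hya hS_eq hz, ?_⟩, hxy.trans hyz⟩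
    rcases Act.eq_onePt_or_eq_negOnePt a with rfl | rfl
    exacts [Or.inl hR, Or.inr hR]
  exact ⟨(hreachable fun _ => onePt).imp fun _ hx => hx.1, hreachable⟩

theorem stmt13 {V : Type*} [Fintype V] [DecidableEq V] [Nonempty V]
    (W : V → V → ℝ) (h : V → ℝ) (hdiag : ∀ i, W i i = 0)
    (R S : Finset V) (hUnion : R ∪ S = Finset.univ) (hDisj : Disjoint R S)
    (hRpos : ∀ i ∈ R, ∀ j ∈ R, 0 ≤ W i j)
    (hind : Indecomposable (fun i j : {i // i ∈ R} => W i.1 j.1)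
      (fun i : {i // i ∈ R} => h i.1 - ∑ j ∈ S, |W i.1 j|)
      (fun i : {i // i ∈ R} => h i.1 + ∑ j ∈ S, |W i.1 j|))
    (hdeg : ∀ i ∈ R, ∑ j ∈ S, |W i j| < (∑ j ∈ R, |W i j|) - |h i|)
    (hreach : ∀ a : Act, GloballyBRReachable (fun i j : {i // i ∈ S} => W i.1 j.1)
      (fun i : {i // i ∈ S} => h i.1 + ∑ j ∈ R, W i.1 j * (a : ℝ))
      {z : {i // i ∈ S} → Act | IsNash (fun i j : {i // i ∈ S} => W i.1 j.1)
        (fun i : {i // i ∈ S} => h i.1 + ∑ j ∈ R, W i.1 j * (a : ℝ)) z}) :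
    ({x : V → Act | IsNash W h x ∧
        ((∀ i ∈ R, x i = onePt) ∨ (∀ i ∈ R, x i = negOnePt))}).Nonempty ∧
    GloballyBRReachable W h
      {x : V → Act | IsNash W h x ∧
        ((∀ i ∈ R, x i = onePt) ∨ (∀ i ∈ R, x i = negOnePt))} :=
  stmt13_general W h hdiag R S hUnion hDisj hRpos hind hdeg hreach
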